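/- Let m be a discrete m-function with continued fraction coefficients {(a_n,b_n)}_{n≥1} and stripping sequence (m_n)_{n≥0}. Then for every L ≥ 1 and every z ∈ ℂ₊, the coefficient stripping formula holds: m_L(z) · (−a_L)(p_{L−1}(z)m(z) + q_{L−1}(z)) = p_L(z)m(z) + q_L(z), where p_L(z) = p_L(z;{a_j,b_j}_{j=1}^L) and similarly for q_L, p_{L−1}, q_{L−1}; equivalently, m_L(z) = (p_L(z)m(z) + q_L(z)) / (−a_L(p_{L−1}(z)m(z) + q_{L−1}(z))). -/

import Mathlib

open MeasureTheory Polynomial Filter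

noncomputable section

/-- A discrete m-function: the Cauchy transform of a compactly supported
probability measure on `ℝ`, viewed as a function on the upper half plane
`ℂ₊ = {z : 0 < z.im}`. -/
def IsDiscreteMFunction (m : ℂ → ℂ) : Prop :=
  ∃ ρ : Measure ℝ, IsProbabilityMeasure ρ ∧ (∃ t : ℝ, ρ (Set.Icc (-t) t) = 1) ∧
    ∀ z : ℂ, 0 < z.im → m z = ∫ x : ℝ, ((x : ℂ) - z)⁻¹ ∂ρ

/-- `m` has continued fraction (Jacobi) coefficients `{(a n, b n)}_{n ≥ 1}`
(sequences indexed from 1; index 0 unused) with stripping sequence `ms`. -/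
def HasJacobiCoeffs (m : ℂ → ℂ) (a b : ℕ → ℝ) (ms : ℕ → ℂ → ℂ) : Prop :=
  ms 0 = m ∧ (∀ n, IsDiscreteMFunction (ms n)) ∧
    ∀ n, ∀ z : ℂ, 0 < z.im →
      ms n z = ((b (n + 1) : ℂ) - z - (a (n + 1) : ℂ) ^ 2 * ms (n + 1) z)⁻¹

/-- Shifted first-kind polynomials: `pShift a b (j+1) = p_j(·; {a_i, b_i}_{i=1}^j)`,
so `pShift a b 0 = p₋₁ = 0`, `pShift a b 1 = p₀ = 1`, and the recurrence
`z p_j = a_{j+1} p_{j+1} + b_{j+1} p_j + a_j p_{j-1}` holds. -/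
def pShift (a b : ℕ → ℝ) : ℕ → ℂ → ℂ
  | 0 => fun _ => 0
  | 1 => fun _ => 1
  | (n + 2) => fun z =>
      ((z - (b (n + 1) : ℂ)) * pShift a b (n + 1) z - (a n : ℂ) * pShift a b n z) /
        (a (n + 1) : ℂ)

/-- The first-kind polynomial `p_n(z; {a_j, b_j}_{j=1}^n)`. -/
def firstKind (a b : ℕ → ℝ) (n : ℕ) : ℂ → ℂ := pShift a b (n + 1)

/-- The second-kind polynomial `q_n(z; {a_j, b_j}_{j=1}^n) = a₁⁻¹ p_{n-1}(z; {a_j, b_j}_{j=2}^n)`,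
with `q₀ = 0`. -/
def secondKind (a b : ℕ → ℝ) (n : ℕ) : ℂ → ℂ :=
  fun z => ((a 1 : ℂ))⁻¹ * pShift (fun j => a (j + 1)) (fun j => b (j + 1)) n z

/-- The conjugated transfer matrix `T_n = [[p_n, q_n], [-a_n p_{n-1}, -a_n q_{n-1}]]`
of the parameters `(a_j, b_j)_{j=1}^n`. -/
def ctm (a b : ℕ → ℝ) (n : ℕ) : Matrix (Fin 2) (Fin 2) (ℂ → ℂ) :=
  !![firstKind a b n, secondKind a b n;
     (fun z => -(a n : ℂ) * firstKind a b (n - 1) z),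
     (fun z => -(a n : ℂ) * secondKind a b (n - 1) z)]

/-- The finite string `(s (start+1), …, s (start+len))` is a palindrome. -/
def PalSeg {α : Type*} (s : ℕ → α) (start len : ℕ) : Prop :=
  ∀ i, 1 ≤ i → i ≤ len → s (start + i) = s (start + (len + 1 - i))

/-- The pair of `p`-periodic sequences `(a, b)` is doubly palindromic with period `p`
and first length `ℓ` (`1 ≤ ℓ ≤ p - 2`): `(a₁,…,a_ℓ)` and `(a_{ℓ+1},…,a_p)` are palindromes,
and `(b₁,…,b_{ℓ+1})` and `(b_{ℓ+2},…,b_p)` are palindromes. -/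
def DoublyPalindromic (a b : ℕ → ℝ) (p ℓ : ℕ) : Prop :=
  1 ≤ ℓ ∧ ℓ + 2 ≤ p ∧
    PalSeg a 0 ℓ ∧ PalSeg a ℓ (p - ℓ) ∧
    PalSeg b 0 (ℓ + 1) ∧ PalSeg b (ℓ + 1) (p - (ℓ + 1))

/-! Put `u_n = p_n m + q_n`. Since `p_n` and `q_n` both satisfy the three-term recurrence
`a_{n+1} u_{n+1} = (z - b_{n+1}) u_n - a_n u_{n-1}`, so does `u_n`, and `u_0 = m`. A discrete
m-function has positive imaginary part on `ℂ₊`, so it does not vanish there and the stripping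
relation becomes `m_n (b_{n+1} - z - a_{n+1}² m_{n+1}) = 1`. The claim `u_L = -a_L m_L u_{L-1}`
follows by induction on `L`: by the recurrence, its instance at `L + 1` says
`(b_{L+1} - z - a_{L+1}² m_{L+1}) u_L = -a_L u_{L-1}`, which is the stripping relation at `L`
multiplied by `-a_L u_{L-1}` once `u_L` is replaced using the instance at `L`. -/

section CauchyKernel

variable {z : ℂ}

lemma ofReal_sub_ne_zero_of_im_pos (hz : 0 < z.im) (x : ℝ) : (x : ℂ) - z ≠ 0 := fun h =>
  hz.ne' (by simpa using congrArg Complex.im h)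

lemma im_inv_ofReal_sub_pos (hz : 0 < z.im) (x : ℝ) : 0 < ((x : ℂ) - z)⁻¹.im := by
  rw [Complex.inv_im, Complex.sub_im, Complex.ofReal_im, zero_sub, neg_neg]
  exact div_pos hz (Complex.normSq_pos.mpr (ofReal_sub_ne_zero_of_im_pos hz x))

lemma norm_inv_ofReal_sub_le (hz : 0 < z.im) (x : ℝ) : ‖((x : ℂ) - z)⁻¹‖ ≤ z.im⁻¹ := by
  rw [norm_inv]
  refine inv_anti₀ hz ?_
  simpa [abs_of_pos hz] using Complex.abs_im_le_norm ((x : ℂ) - z)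

lemma integrable_inv_ofReal_sub (hz : 0 < z.im) (ρ : Measure ℝ) [IsFiniteMeasure ρ] :
    Integrable (fun x : ℝ => ((x : ℂ) - z)⁻¹) ρ :=
  (integrable_const z.im⁻¹).mono'
    ((Complex.continuous_ofReal.sub continuous_const).inv₀
      (ofReal_sub_ne_zero_of_im_pos hz)).aestronglyMeasurable
    (.of_forall (norm_inv_ofReal_sub_le hz))

end CauchyKernel

lemma IsDiscreteMFunction.im_pos {f : ℂ → ℂ} (hf : IsDiscreteMFunction f) {z : ℂ}
    (hz : 0 < z.im) : 0 < (f z).im := by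
  obtain ⟨ρ, hρ, -, hf⟩ := hf
  have hint := integrable_inv_ofReal_sub hz ρ
  have him : (∫ x : ℝ, ((x : ℂ) - z)⁻¹ ∂ρ).im = ∫ x : ℝ, ((x : ℂ) - z)⁻¹.im ∂ρ :=
    (integral_im hint).symm
  rw [hf z hz, him, integral_pos_iff_support_of_nonneg
    (fun x => (im_inv_ofReal_sub_pos hz x).le) hint.im]
  have hsupp : Function.support (fun x : ℝ => ((x : ℂ) - z)⁻¹.im) = Set.univ :=
    Set.eq_univ_of_forall fun x => (im_inv_ofReal_sub_pos hz x).ne'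
  rw [hsupp, measure_univ]
  exact one_pos

lemma HasJacobiCoeffs.mul_stripping_denom_eq_one {m : ℂ → ℂ} {a b : ℕ → ℝ}
    {ms : ℕ → ℂ → ℂ} (h : HasJacobiCoeffs m a b ms) (n : ℕ) {z : ℂ} (hz : 0 < z.im) :
    ms n z * ((b (n + 1) : ℂ) - z - (a (n + 1) : ℂ) ^ 2 * ms (n + 1) z) = 1 := by
  have hne : ms n z ≠ 0 := fun h0 => by simpa [h0] using (h.2.1 n).im_pos hz
  rw [h.2.2 n z hz] at hne ⊢
  exact inv_mul_cancel₀ (mt inv_eq_zero.mpr hne)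

section Recurrence

variable (a b : ℕ → ℝ) (z : ℂ)

lemma firstKind_zero : firstKind a b 0 z = 1 := rfl

lemma firstKind_one : firstKind a b 1 z = (z - (b 1 : ℂ)) / (a 1 : ℂ) := by
  simp [firstKind, pShift]

lemma secondKind_zero : secondKind a b 0 z = 0 := by
  simp [secondKind, pShift]

lemma secondKind_one : secondKind a b 1 z = (a 1 : ℂ)⁻¹ := by
  simp [secondKind, pShift]

lemma firstKind_add_two (k : ℕ) :
    firstKind a b (k + 2) z =
      ((z - (b (k + 2) : ℂ)) * firstKind a b (k + 1) z
        - (a (k + 1) : ℂ) * firstKind a b k z) / (a (k + 2) : ℂ) := by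
  simp only [firstKind, pShift]

lemma secondKind_add_two (k : ℕ) :
    secondKind a b (k + 2) z =
      ((z - (b (k + 2) : ℂ)) * secondKind a b (k + 1) z
        - (a (k + 1) : ℂ) * secondKind a b k z) / (a (k + 2) : ℂ) := by
  simp only [secondKind, pShift]
  ring

end Recurrence

theorem coefficient_stripping_general
    (m : ℂ → ℂ) (a b : ℕ → ℝ) (ms : ℕ → ℂ → ℂ)
    (hapos : ∀ n, 1 ≤ n → 0 < a n)
    (hcoef : HasJacobiCoeffs m a b ms) :
    ∀ L, 1 ≤ L → ∀ z : ℂ, 0 < z.im →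
      ms L z * (-(a L : ℂ)) *
          (firstKind a b (L - 1) z * m z + secondKind a b (L - 1) z) =
        firstKind a b L z * m z + secondKind a b L z := by
  intro L hL z hz
  have ha (n : ℕ) : (a (n + 1) : ℂ) ≠ 0 := by
    exact_mod_cast (hapos (n + 1) (Nat.le_add_left 1 n)).ne'
  have hD (n : ℕ) := hcoef.mul_stripping_denom_eq_one n hz
  obtain ⟨n, rfl⟩ := Nat.exists_eq_add_of_le' hL
  rw [Nat.add_sub_cancel]
  clear hL
  induction n with
  | zero =>
    rw [firstKind_zero, firstKind_one, secondKind_zero, secondKind_one, ← hcoef.1]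
    field_simp [ha 0]
    linear_combination hD 0
  | succ k ih =>
    rw [show k + 1 + 1 = k + 2 from rfl, firstKind_add_two, secondKind_add_two]
    field_simp [ha (k + 1)]
    linear_combination (-(a (k + 1) : ℂ) * (firstKind a b k z * m z + secondKind a b k z)) *
        hD (k + 1) - ((b (k + 2) : ℂ) - z - (a (k + 2) : ℂ) ^ 2 * ms (k + 2) z) * ih

/-- **Coefficient stripping formula.** If `m` has Jacobi coefficients `(a, b)` with
stripping sequence `(m_n)`, then for all `L ≥ 1` and `z ∈ ℂ₊`,
`m_L(z) · (-a_L)(p_{L-1}(z)m(z) + q_{L-1}(z)) = p_L(z)m(z) + q_L(z)`. -/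
theorem coefficient_stripping
    (m : ℂ → ℂ) (a b : ℕ → ℝ) (ms : ℕ → ℂ → ℂ)
    (hapos : ∀ n, 1 ≤ n → 0 < a n)
    (hm : IsDiscreteMFunction m) (hcoef : HasJacobiCoeffs m a b ms) :
    ∀ L, 1 ≤ L → ∀ z : ℂ, 0 < z.im →
      ms L z * (-(a L : ℂ)) *
          (firstKind a b (L - 1) z * m z + secondKind a b (L - 1) z) =
        firstKind a b L z * m z + secondKind a b L z :=
  coefficient_stripping_general m a b ms hapos hcoef
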